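/- arXiv:0902.0106 — 2 statements merged into one kernel-verified Lean document; each statement's English description precedes it below -/
import Mathlib

section
/- Let X be a compact metric space and f : X → X continuous. If the set of periodic points of f is dense in X, then the set of periodic points of the induced map f̄ on the hyperspace K(X) is dense in K(X) (with the Vietoris/Hausdorff-metric topology). -/
open TopologicalSpace

/-- The induced map on the hyperspace of nonempty compact subsets. -/
def barMap {X : Type*} [TopologicalSpace X] (f : X → X) (hf : Continuous f) :
    NonemptyCompacts X → NonemptyCompacts X :=
  fun A => ⟨⟨f '' A, A.isCompact.image hf⟩, A.nonempty.image f⟩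

/-- Topological transitivity. -/
def IsTransitive {X : Type*} [TopologicalSpace X] (f : X → X) : Prop :=
  ∀ U V : Set X, IsOpen U → IsOpen V → U.Nonempty → V.Nonempty →
    ∃ n : ℕ, (f^[n] '' U ∩ V).Nonempty

/-- Topological mixing. -/
def IsMixing {X : Type*} [TopologicalSpace X] (f : X → X) : Prop :=
  ∀ U V : Set X, IsOpen U → IsOpen V → U.Nonempty → V.Nonempty →
    ∃ N : ℕ, ∀ n ≥ N, (f^[n] '' U ∩ V).Nonempty

/-- Weak mixing: `f × f` is transitive. -/
def IsWeaklyMixing {X : Type*} [TopologicalSpace X] (f : X → X) : Prop :=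
  IsTransitive (fun p : X × X => (f p.1, f p.2))

/-- The set of periodic points. -/
def Periodics {X : Type*} (f : X → X) : Set X := {x | ∃ n ≥ 1, f^[n] x = x}

lemma barMap_iterate_coe {X : Type*} [TopologicalSpace X] (f : X → X) (hf : Continuous f)
    (n : ℕ) (A : NonemptyCompacts X) :
    (((barMap f hf)^[n] A : NonemptyCompacts X) : Set X) = f^[n] '' A := by
  induction n with
  | zero => simp
  | succ n ih =>
      rw [Function.iterate_succ_apply', Function.iterate_succ' f n]
      show f '' (((barMap f hf)^[n] A : NonemptyCompacts X) : Set X) = _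
      rw [ih, Set.image_comp]

/-- Density of periodic points in the base system implies density of periodic
points of the induced map in the hyperspace. -/
theorem hyper_densePeriodic_of_base_densePeriodic
    {X : Type*} [MetricSpace X] [CompactSpace X]
    (f : X → X) (hf : Continuous f)
    (h : Dense (Periodics f)) : Dense (Periodics (barMap f hf)) := by
  rw [Metric.dense_iff]
  intro A ε hε
  -- choose for every point a periodic point within ε/3
  have choice : ∀ x : X, ∃ p : X, (∃ n ≥ 1, f^[n] p = p) ∧ dist x p < ε / 3 := by
    intro x
    obtain ⟨p, hpb, hpp⟩ := Metric.dense_iff.1 h x (ε / 3) (by linarith)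
    exact ⟨p, hpp, by simpa [dist_comm] using hpb⟩
  choose p hp hdp using choice
  choose per hper hfix using hp
  -- finite ε/3-net of A made of points of A
  obtain ⟨t, hts, htf, hcov⟩ :=
    (A.isCompact.totallyBounded).exists_subset
      (Metric.dist_mem_uniformity (show (0:ℝ) < ε / 3 by linarith))
  have htne : t.Nonempty := by
    obtain ⟨a, ha⟩ := A.nonempty
    obtain ⟨x, hx, -⟩ := Set.mem_iUnion₂.1 (hcov ha)
    exact ⟨x, hx⟩
  -- the candidate periodic compact set
  set S : Set X := p '' t with hS
  have hSfin : S.Finite := htf.image p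
  have hSne : S.Nonempty := htne.image p
  set B : NonemptyCompacts X := ⟨⟨S, hSfin.isCompact⟩, hSne⟩ with hB
  -- B is periodic
  set N : ℕ := ∏ x ∈ htf.toFinset, per x with hN
  have hN1 : 1 ≤ N := Finset.one_le_prod' fun x _ => hper x
  have hfixS : ∀ q ∈ S, f^[N] q = q := by
    rintro q ⟨x, hx, rfl⟩
    obtain ⟨k, hk⟩ := Finset.dvd_prod_of_mem per (htf.mem_toFinset.2 hx)
    rw [← hN] at hk
    rw [hk, Function.iterate_mul]
    exact Function.iterate_fixed (hfix x) k
  have hBper : B ∈ Periodics (barMap f hf) := by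
    refine ⟨N, hN1, ?_⟩
    apply NonemptyCompacts.ext
    rw [barMap_iterate_coe]
    apply Set.Subset.antisymm
    · rintro _ ⟨q, hq, rfl⟩
      rwa [hfixS q hq]
    · intro q hq
      exact ⟨q, hq, hfixS q hq⟩
  refine ⟨B, Metric.mem_ball'.2 ?_, hBper⟩
  rw [Metric.NonemptyCompacts.dist_eq]
  have hle : Metric.hausdorffDist (A : Set X) (B : Set X) ≤ 2 * ε / 3 := by
    apply Metric.hausdorffDist_le_of_mem_dist (by linarith)
    · intro x hx
      obtain ⟨y, hy, hxy⟩ := Set.mem_iUnion₂.1 (hcov hx)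
      refine ⟨p y, ⟨y, hy, rfl⟩, ?_⟩
      have h1 : dist x (p y) ≤ dist x y + dist y (p y) := dist_triangle _ _ _
      have h2 : dist x y < ε / 3 := hxy
      have h3 : dist y (p y) < ε / 3 := hdp y
      linarith
    · rintro _ ⟨x, hx, rfl⟩
      exact ⟨x, hts hx, by
        have := hdp x; rw [dist_comm] at this; linarith⟩
  linarith
end

section
/- Let X be a compact metric space, f : X → X continuous, and f̄ the induced map on K(X). The set of periodic points of f̄ is dense in K(X) if and only if for every nonempty open subset U of X there exist a nonempty compact set K ⊆ U and an integer n ≥ 1 such that fⁿ(K) = K. -/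
open TopologicalSpace

lemma barMap_iter_coe {X : Type*} [TopologicalSpace X] (f : X → X) (hf : Continuous f)
    (A : NonemptyCompacts X) (n : ℕ) :
    (((barMap f hf)^[n] A : NonemptyCompacts X) : Set X) = f^[n] '' (A : Set X) := by
  induction n with
  | zero => simp
  | succ n ih =>
    rw [Function.iterate_succ_apply']
    show f '' _ = _
    rw [ih, Function.iterate_succ', Set.image_comp]

lemma iter_image_invariant {X : Type*} (g : X → X) {K : Set X} (h : g '' K = K) (m : ℕ) :
    g^[m] '' K = K := by
  induction m with
  | zero => simp
  | succ m ih =>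
    rw [Function.iterate_succ', Set.image_comp, ih, h]

/-- Periodic points of the induced map are dense in the hyperspace iff every
nonempty open subset of X contains a nonempty compact set invariant under some
iterate of f. -/
theorem hyper_densePeriodic_iff_invariant_compacts
    {X : Type*} [MetricSpace X] [CompactSpace X]
    (f : X → X) (hf : Continuous f) :
    Dense (Periodics (barMap f hf)) ↔
      ∀ U : Set X, IsOpen U → U.Nonempty →
        ∃ K : Set X, K.Nonempty ∧ IsCompact K ∧ K ⊆ U ∧
          ∃ n : ℕ, 1 ≤ n ∧ f^[n] '' K = K := by
  constructor
  · intro hd U hU ⟨x, hxU⟩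
    obtain ⟨ε, hε, hball⟩ := Metric.isOpen_iff.1 hU x hxU
    set S : NonemptyCompacts X := ⟨⟨{x}, isCompact_singleton⟩, Set.singleton_nonempty x⟩
    obtain ⟨A, hA, hAper⟩ := (Metric.dense_iff.1 hd S ε hε)
    obtain ⟨n, hn1, hAn⟩ := hAper
    refine ⟨(A : Set X), A.nonempty, A.isCompact, ?_, n, hn1, ?_⟩
    · intro b hb
      apply hball
      have hfin : EMetric.hausdorffEdist (A : Set X) (S : Set X) ≠ ⊤ :=
        Metric.hausdorffEdist_ne_top_of_nonempty_of_bounded A.nonempty S.nonempty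
          A.isCompact.isBounded S.isCompact.isBounded
      have h1 : Metric.infDist b (S : Set X) ≤ Metric.hausdorffDist (A : Set X) (S : Set X) :=
        Metric.infDist_le_hausdorffDist_of_mem hb hfin
      have h2 : Metric.infDist b (S : Set X) = dist b x := by
        simp [S, Metric.infDist_singleton]
      have h3 : Metric.hausdorffDist (A : Set X) (S : Set X) < ε := by
        rw [← Metric.NonemptyCompacts.dist_eq]
        simpa [dist_comm] using Metric.mem_ball.1 hA
      simp only [Metric.mem_ball]
      linarith [h1, h3, h2.symm.le]
    · rw [← barMap_iter_coe f hf A n, hAn]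
  · intro h
    rw [Metric.dense_iff]
    intro B ε hε
    -- cover B by balls of radius ε/3 centered at points of B
    have hcov : (B : Set X) ⊆ ⋃ x ∈ (B : Set X), Metric.ball x (ε / 3) := by
      intro y hy
      exact Set.mem_biUnion hy (by simp; positivity)
    obtain ⟨t, htB, htfin, htcov⟩ :=
      B.isCompact.elim_finite_subcover_image (fun x _ => Metric.isOpen_ball) hcov
    -- t is nonempty
    obtain ⟨b₀, hb₀⟩ := B.nonempty
    obtain ⟨x₀, hx₀t, _⟩ := Set.mem_iUnion₂.1 (htcov hb₀)
    -- choose invariant compact sets in each ball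
    choose K hKne hKcpt hKsub nn hnn1 hKinv using fun x : X =>
      h (Metric.ball x (ε / 3)) Metric.isOpen_ball ⟨x, by simp; positivity⟩
    -- the common period
    lift t to Finset X using htfin
    set N : ℕ := ∏ x ∈ t, nn x with hN
    have hN1 : 1 ≤ N := Finset.one_le_prod' fun i _ => hnn1 i
    -- the invariant compact set
    set A : Set X := ⋃ x ∈ (t : Set X), K x with hA
    have hAcpt : IsCompact A := t.finite_toSet.isCompact_biUnion fun i _ => hKcpt i
    have hAne : A.Nonempty := (hKne x₀).mono (Set.subset_biUnion_of_mem hx₀t)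
    have hAinv : f^[N] '' A = A := by
      rw [hA, Set.image_iUnion₂]
      refine Set.iUnion₂_congr fun i hi => ?_
      obtain ⟨m, hm⟩ := Finset.dvd_prod_of_mem nn (by simpa using hi)
      rw [hN, hm, Function.iterate_mul]
      exact iter_image_invariant _ (hKinv i) m
    set Ac : NonemptyCompacts X := ⟨⟨A, hAcpt⟩, hAne⟩
    refine ⟨Ac, ?_, N, hN1, ?_⟩
    · -- distance bound
      rw [Metric.mem_ball, Metric.NonemptyCompacts.dist_eq]
      have hle : Metric.hausdorffDist (Ac : Set X) (B : Set X) ≤ 2 * ε / 3 := by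
        apply Metric.hausdorffDist_le_of_mem_dist (by positivity)
        · intro a ha
          obtain ⟨i, hi, hai⟩ := Set.mem_iUnion₂.1 ha
          refine ⟨i, htB hi, ?_⟩
          have := Metric.mem_ball.1 (hKsub i hai)
          linarith
        · intro b hb
          obtain ⟨i, hi, hbi⟩ := Set.mem_iUnion₂.1 (htcov hb)
          obtain ⟨k, hk⟩ := hKne i
          refine ⟨k, Set.mem_biUnion hi hk, ?_⟩
          have h1 := Metric.mem_ball.1 hbi
          have h2 := Metric.mem_ball.1 (hKsub i hk)
          calc dist b k ≤ dist b i + dist i k := dist_triangle _ _ _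
            _ ≤ ε / 3 + ε / 3 := by
                rw [dist_comm i k]
                exact add_le_add h1.le h2.le
            _ ≤ 2 * ε / 3 := by linarith
      linarith
    · -- periodicity
      apply NonemptyCompacts.ext
      rw [barMap_iter_coe]
      exact hAinv
end
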